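/- arXiv:1110.1124 — 4 statements merged into one kernel-verified Lean document; each statement's English description precedes it below -/
import Mathlib

section
/- Let c be a real number and let x : ℕ → ℝ satisfy x 0 = 1, x 1 = c, and x (n+2) = (c + 1) · x (n+1) − 2c · x n for all n ∈ ℕ. Then for every n ∈ ℕ, x (n+1) = c · (x n − ∑_{j=0}^{n−1} x j). (The solution of the linear recurrence satisfies the adversary's defining profit-ratio identities.) -/
theorem linear_recurrence_to_adversary_defining (c : ℝ) (x : ℕ → ℝ)
    (h0 : x 0 = 1) (h1 : x 1 = c)
    (hrec : ∀ n : ℕ, x (n + 2) = (c + 1) * x (n + 1) - 2 * c * x n) :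
    ∀ n : ℕ, x (n + 1) = c * (x n - ∑ j ∈ Finset.range n, x j) := by
  intro n
  induction n with
  | zero => simp [h0, h1]
  | succ n ih =>
    rw [hrec, Finset.sum_range_succ]
    have : c * ∑ j ∈ Finset.range n, x j = c * x n - x (n + 1) := by
      rw [ih]; ring
    nlinarith [this]
end

section
/- Let p, q be real numbers with p² < 4q, and let x : ℕ → ℝ satisfy x (n+2) = p · x (n+1) − q · x n for all n ∈ ℕ, with x 0 = 1. Then there exists n ∈ ℕ with x n ≤ 0. (A real solution of a second-order linear recurrence whose characteristic polynomial has non-real roots cannot stay positive forever; this underlies the termination of the adversary construction.) -/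
theorem recurrence_complex_roots_not_positive_forever (p q : ℝ)
    (hdisc : p ^ 2 < 4 * q) (x : ℕ → ℝ) (h0 : x 0 = 1)
    (hrec : ∀ n : ℕ, x (n + 2) = p * x (n + 1) - q * x n) :
    ∃ n : ℕ, x n ≤ 0 := by
  by_contra h
  push_neg at h
  have hx : ∀ n, 0 < x n := h
  set c := q - p ^ 2 / 4 with hc
  have hcpos : 0 < c := by rw [hc]; linarith
  set r : ℕ → ℝ := fun n => x (n + 1) / x n with hr
  have hrpos : ∀ n, 0 < r n := fun n => div_pos (hx _) (hx _)
  clear_value c r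
  have hstep : ∀ n, r (n + 1) ≤ r n - c / r n := by
    intro n
    have hxn := hx n
    have hxn1 := hx (n + 1)
    have hrn := hrpos n
    have heq : r (n + 1) = p - q / r n := by
      simp only [hr]
      rw [hrec]
      field_simp
    rw [heq]
    rw [← sub_nonneg]
    have hdiff : r n - c / r n - (p - q / r n) = ((r n) ^ 2 - p * r n + q - c) / r n := by
      field_simp
      ring
    rw [hdiff]
    apply div_nonneg _ hrn.le
    nlinarith [sq_nonneg (r n - p / 2), hc]
  have hbd : ∀ n : ℕ, r n ≤ r 0 - n * (c / r 0) := by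
    intro n
    induction n with
    | zero => simp
    | succ k ih =>
      have hr0 := hrpos 0
      have hrk := hrpos k
      have hcr0 : 0 < c / r 0 := div_pos hcpos hr0
      have hk0 : (0:ℝ) ≤ (k:ℝ) := Nat.cast_nonneg k
      have h1 : r k ≤ r 0 := by nlinarith
      have h2 : c / r 0 ≤ c / r k := by gcongr
      calc r (k + 1) ≤ r k - c / r k := hstep k
        _ ≤ r k - c / r 0 := by linarith
        _ ≤ r 0 - k * (c / r 0) - c / r 0 := by linarith
        _ = r 0 - (k + 1 : ℕ) * (c / r 0) := by push_cast; ring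
  have hr0 := hrpos 0
  have hcr0 : 0 < c / r 0 := div_pos hcpos hr0
  obtain ⟨N, hN⟩ := exists_nat_gt (r 0 / (c / r 0))
  have hNb : r 0 < N * (c / r 0) := by
    rw [div_lt_iff₀ hcr0] at hN
    linarith
  have := hbd N
  have := hrpos N
  linarith
end

section
/- Let c be a real number with 1 ≤ c < 3 + 2√2, and let x : ℕ → ℝ satisfy x 0 = 1, x 1 = c, and x (n+2) = (c + 1) · x (n+1) − 2c · x n for all n ∈ ℕ. Then there exists m ∈ ℕ such that x (m+2) ≤ x (m+1). (Because the characteristic polynomial has two complex roots for such c, the adversary's job-length sequence cannot increase strictly forever.) -/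
/-!
The characteristic polynomial `t² - (c + 1) t + 2c` has negative discriminant for these `c`.
For a recurrence `x (n + 2) = p x (n + 1) - q x n` with `p² < 4q`, the ratios `r n = x (n + 1) / x n`
of a positive solution satisfy `r (n + 1) = p - q / r n ≤ r n - (q - p² / 4) / r n`, so they
decrease by at least a fixed amount at every step and eventually become negative. An increasing
sequence starting at `1` is positive, hence cannot solve the recurrence.
-/

open Real

lemma exists_nonpos_of_le_sub_const {r : ℕ → ℝ} {δ : ℝ} (hδ : 0 < δ)
    (h : ∀ n, r (n + 1) ≤ r n - δ) : ∃ n, r n ≤ 0 := by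
  have hle : ∀ n : ℕ, r n ≤ r 0 - n * δ := by
    intro n
    induction n with
    | zero => simp
    | succ k ih => push_cast; linarith [h k]
  obtain ⟨n, hn⟩ := exists_nat_gt (r 0 / δ)
  refine ⟨n, (hle n).trans ?_⟩
  rw [div_lt_iff₀ hδ] at hn
  linarith

lemma sub_div_le_sub_div_of_pos {r : ℝ} (hr : 0 < r) (p q : ℝ) :
    p - q / r ≤ r - (q - p ^ 2 / 4) / r := by
  have h : r - (q - p ^ 2 / 4) / r - (p - q / r) = (r - p / 2) ^ 2 / r := by
    field_simp
    ring
  linarith [div_nonneg (sq_nonneg (r - p / 2)) hr.le]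

theorem exists_nonpos_of_discrim_neg {p q : ℝ} (hpq : p ^ 2 < 4 * q) {x : ℕ → ℝ}
    (hrec : ∀ n, x (n + 2) = p * x (n + 1) - q * x n) : ∃ n, x n ≤ 0 := by
  by_contra! hpos
  set r : ℕ → ℝ := fun n => x (n + 1) / x n with hr
  have hr_pos : ∀ n, 0 < r n := fun n => div_pos (hpos _) (hpos _)
  have hr_succ : ∀ n, r (n + 1) = p - q / r n := by
    intro n
    have := (hpos n).ne'
    have := (hpos (n + 1)).ne'
    simp only [hr, hrec n]
    field_simp
  set ε := q - p ^ 2 / 4 with hε_def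
  have hε : 0 < ε := by linarith
  have hr_step : ∀ n, r (n + 1) ≤ r n - ε / r n := fun n =>
    (hr_succ n).trans_le (sub_div_le_sub_div_of_pos (hr_pos n) p q)
  have hr_anti : Antitone r := antitone_nat_of_succ_le fun n => by
    linarith [hr_step n, div_pos hε (hr_pos n)]
  obtain ⟨n, hn⟩ := exists_nonpos_of_le_sub_const (div_pos hε (hr_pos 0)) fun n =>
    (hr_step n).trans <| sub_le_sub_left
      (div_le_div_of_nonneg_left hε.le (hr_pos n) (hr_anti (Nat.zero_le n))) _
  exact (hr_pos n).not_ge hn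

lemma add_one_sq_lt_eight_mul {c : ℝ} (hc1 : 3 - 2 * √2 < c) (hc2 : c < 3 + 2 * √2) :
    (c + 1) ^ 2 < 4 * (2 * c) := by
  have h2 : √2 ^ 2 = 2 := sq_sqrt (by norm_num)
  nlinarith [mul_pos (sub_pos.2 hc1) (sub_pos.2 hc2)]

theorem adversary_sequence_eventually_nonincreasing (c : ℝ)
    (hc1 : 1 ≤ c) (hc2 : c < 3 + 2 * Real.sqrt 2) (x : ℕ → ℝ)
    (h0 : x 0 = 1) (h1 : x 1 = c)
    (hrec : ∀ n : ℕ, x (n + 2) = (c + 1) * x (n + 1) - 2 * c * x n) :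
    ∃ m : ℕ, x (m + 2) ≤ x (m + 1) := by
  by_contra! hinc
  have hpos : ∀ n, 0 < x n := by
    intro n
    induction n using Nat.twoStepInduction with
    | zero => rw [h0]; norm_num
    | one => rw [h1]; linarith
    | more m _ ih => exact ih.trans (hinc m)
  have hc : 3 - 2 * √2 < c := by linarith [one_lt_sqrt_two]
  obtain ⟨n, hn⟩ := exists_nonpos_of_discrim_neg (add_one_sq_lt_eight_mul hc hc2) hrec
  exact (hpos n).not_ge hn
end

section
/- For every real number c with 1 ≤ c < 3 + 2√2, there exist m ∈ ℕ and x : ℕ → ℝ such that: x 0 = 1; x n ≥ 1 for all n ≤ m + 1; x (n+1) = c · (x n − ∑_{j=0}^{n−1} x j) for all n ≤ m; and x (m+1) − ∑_{j=0}^{m} x j ≤ x (m+1) / c. (This is the existence of the adversary's finite instance of tight jobs showing that no online scheduler with commitment can achieve a competitive ratio exceeding 1/c: whichever job the online scheduler first declines, its profit is at most a 1/c fraction of the offline optimum.) -/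
private noncomputable def advP (c : ℝ) : ℕ → ℝ × ℝ
  | 0 => (1, 0)
  | n + 1 => (c * ((advP c n).1 - (advP c n).2), (advP c n).1 + (advP c n).2)

private lemma advP_sum (c : ℝ) :
    ∀ n, ∑ j ∈ Finset.range n, (advP c j).1 = (advP c n).2 := by
  intro n
  induction n with
  | zero => simp [advP]
  | succ k ih =>
    rw [Finset.sum_range_succ, ih]
    simp [advP]
    ring

private lemma adv_no_forever (c : ℝ) (hc1 : 1 ≤ c) (hlt : (c + 1) ^ 2 < 8 * c)
    (y : ℕ → ℝ) (hy0 : y 0 = 1)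
    (hrec : ∀ n, y (n + 2) = (c + 1) * y (n + 1) - 2 * c * y n) :
    ∃ m, y (m + 1) ≤ y m := by
  by_contra h
  push_neg at h
  -- h : ∀ m, y m < y (m+1)
  have hpos : ∀ n, 1 ≤ y n := by
    intro n
    induction n with
    | zero => simp [hy0]
    | succ k ih => exact le_of_lt (lt_of_le_of_lt ih (h k))
  have hypos : ∀ n, 0 < y n := fun n => lt_of_lt_of_le one_pos (hpos n)
  set r : ℕ → ℝ := fun n => y (n + 1) / y n with hr
  have hr1 : ∀ n, 1 < r n := by
    intro n
    rw [hr]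
    exact (one_lt_div (hypos n)).mpr (h n)
  have hrpos : ∀ n, 0 < r n := fun n => lt_trans one_pos (hr1 n)
  have hrrec : ∀ n, r (n + 1) = (c + 1) - 2 * c / r n := by
    intro n
    have h1 : y (n + 1) ≠ 0 := ne_of_gt (hypos (n + 1))
    have h2 : y n ≠ 0 := ne_of_gt (hypos n)
    rw [hr]
    simp only
    rw [hrec n]
    field_simp
  set ε : ℝ := 2 * c - (c + 1) ^ 2 / 4 with hε
  have hεpos : 0 < ε := by rw [hε]; nlinarith
  have hq : ∀ t : ℝ, ε ≤ t ^ 2 - (c + 1) * t + 2 * c := by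
    intro t
    rw [hε]
    nlinarith [sq_nonneg (t - (c + 1) / 2)]
  have hmono : ∀ n, r (n + 1) ≤ r n := by
    intro n
    rw [hrrec n]
    have h0 := hrpos n
    have h1 := hq (r n)
    have h2 : 2 * c / r n * r n = 2 * c := div_mul_cancel₀ _ (ne_of_gt h0)
    nlinarith [hr1 n]
  have hle0 : ∀ n, r n ≤ r 0 := by
    intro n
    induction n with
    | zero => exact le_refl _
    | succ k ih => exact le_trans (hmono k) ih
  have hstep : ∀ n, r (n + 1) ≤ r n - ε / r 0 := by
    intro n
    have h0 := hrpos n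
    have h00 := hrpos 0
    have hd : ε / r 0 ≤ ε / r n := by
      apply div_le_div_of_nonneg_left (le_of_lt hεpos) h0 (hle0 n)
    have h2 : ε / r n ≤ r n - r (n + 1) := by
      rw [hrrec n]
      rw [div_le_iff₀ h0]
      have h3 : 2 * c / r n * r n = 2 * c := div_mul_cancel₀ _ (ne_of_gt h0)
      have h4 : (r n - (c + 1 - 2 * c / r n)) * r n
          = r n ^ 2 - (c + 1) * r n + 2 * c / r n * r n := by ring
      rw [h3] at h4
      rw [h4]
      linarith [hq (r n)]
    linarith
  have hlin : ∀ n : ℕ, r n ≤ r 0 - n * (ε / r 0) := by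
    intro n
    induction n with
    | zero => simp
    | succ k ih =>
      have := hstep k
      push_cast
      push_cast at ih
      linarith
  obtain ⟨N, hN⟩ := exists_nat_gt ((r 0 - 1) / (ε / r 0))
  have hdivpos : 0 < ε / r 0 := div_pos hεpos (hrpos 0)
  have hN' : r 0 - 1 < N * (ε / r 0) := by
    rw [div_lt_iff₀ hdivpos] at hN
    linarith
  have := hlin N
  have := hr1 N
  linarith

theorem adversary_instance_exists (c : ℝ)
    (hc1 : 1 ≤ c) (hc2 : c < 3 + 2 * Real.sqrt 2) :
    ∃ (m : ℕ) (x : ℕ → ℝ),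
      x 0 = 1 ∧
      (∀ n : ℕ, n ≤ m + 1 → x n ≥ 1) ∧
      (∀ n : ℕ, n ≤ m → x (n + 1) = c * (x n - ∑ j ∈ Finset.range n, x j)) ∧
      x (m + 1) - ∑ j ∈ Finset.range (m + 1), x j ≤ x (m + 1) / c := by
  have hcpos : (0:ℝ) < c := lt_of_lt_of_le one_pos hc1
  -- discriminant is negative
  have hs2 : Real.sqrt 2 ^ 2 = 2 := Real.sq_sqrt (by norm_num)
  have hsnn : 0 ≤ Real.sqrt 2 := Real.sqrt_nonneg 2
  have hs1 : 1 < Real.sqrt 2 := by nlinarith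
  have hlt : (c + 1) ^ 2 < 8 * c := by nlinarith [hc2, hc1, hs2, hs1]
  set x : ℕ → ℝ := fun n => (advP c n).1 with hx
  set y : ℕ → ℝ := fun n => (advP c n).1 - (advP c n).2 with hy
  have hsum : ∀ n, ∑ j ∈ Finset.range n, x j = (advP c n).2 := advP_sum c
  have hx0 : x 0 = 1 := by simp [hx, advP]
  have hy0 : y 0 = 1 := by simp [hy, advP]
  have hxrec : ∀ n, x (n + 1) = c * y n := by
    intro n; simp [hx, hy, advP]
  have hyrec : ∀ n, y (n + 1) = (c + 1) * y n - 2 * x n := by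
    intro n
    show c * ((advP c n).1 - (advP c n).2) - ((advP c n).1 + (advP c n).2)
        = (c + 1) * ((advP c n).1 - (advP c n).2) - 2 * (advP c n).1
    ring
  have hyrec2 : ∀ n, y (n + 2) = (c + 1) * y (n + 1) - 2 * c * y n := by
    intro n
    rw [hyrec (n + 1), hxrec n]
    ring
  have hex := adv_no_forever c hc1 hlt y hy0 hyrec2
  set m := Nat.find hex with hmdef
  have hm : y (m + 1) ≤ y m := Nat.find_spec hex
  have hmin : ∀ k, k < m → ¬ y (k + 1) ≤ y k := fun k hk => Nat.find_min hex hk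
  -- hm : y (m+1) ≤ y m ; hmin : ∀ k < m, ¬ (y (k+1) ≤ y k)
  have hyge : ∀ k, k ≤ m → 1 ≤ y k := by
    intro k
    induction k with
    | zero => intro _; simp [hy0]
    | succ j ih =>
      intro hj
      have hjm : j < m := Nat.lt_of_succ_le hj
      have h1 := hmin j hjm
      push_neg at h1
      exact le_of_lt (lt_of_le_of_lt (ih (le_of_lt hjm)) h1)
  refine ⟨m, x, hx0, ?_, ?_, ?_⟩
  · intro n hn
    cases n with
    | zero => simp [hx0]
    | succ k =>
      have hk : k ≤ m := Nat.lt_succ_iff.mp hn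
      rw [hxrec k]
      have := hyge k hk
      nlinarith
  · intro n _
    rw [hsum n, hxrec n]
  · have hfin : x (m + 1) - ∑ j ∈ Finset.range (m + 1), x j = y (m + 1) := by
      rw [hsum (m + 1)]
    rw [hfin, hxrec m, mul_div_cancel_left₀ _ (ne_of_gt hcpos)]
    exact hm
end
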